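/- arXiv:2310.14663 — 5 statements merged into one kernel-verified Lean document; each statement's English description precedes it below -/
import Mathlib

section
/- For a positive semidefinite real matrix L indexed by a finite set ι and any subset A ⊆ ι, the sum over all subsets B of ι \ A of det(L_{A ∪ B}) equals det(L + I_Ā), where I_Ā is the diagonal matrix with ones at the diagonal entries indexed by ι \ A and zeros elsewhere. Consequently, the conditional DPP probability P(Y = A ∪ B | A ⊆ Y) = det(L_{A∪B}) / det(L + I_Ā) defines a probability distribution over subsets B ⊆ ι \ A. -/
/-!
Expanding `det (L + diagonal d)` multilinearly in the rows gives
`∑_S det L_S * ∏_{i ∉ S} d i`. For `d` the indicator of `ι \ A` the product vanishes unless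
`A ⊆ S`, and writing `S = A ∪ B` yields the normalization identity. Principal submatrices of a
positive semidefinite matrix are positive semidefinite, so every term is nonnegative.
-/

open Matrix BigOperators

/-- Principal submatrix of `L` whose rows and columns are indexed by the
elements of the finite subset `Y`. -/
def principalSub {ι : Type*} (L : Matrix ι ι ℝ) (Y : Finset ι) :
    Matrix Y Y ℝ :=
  L.submatrix (fun x => x.1) (fun x => x.1)

theorem Finset.sum_supersets_eq_sum_powerset_compl {ι M : Type*} [Fintype ι] [DecidableEq ι]
    [AddCommMonoid M] (A : Finset ι) (f : Finset ι → M) :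
    ∑ S with A ⊆ S, f S = ∑ B ∈ Aᶜ.powerset, f (A ∪ B) := by
  refine Finset.sum_nbij' (· \ A) (A ∪ ·) ?_ ?_ ?_ ?_ ?_
  · exact fun S _ => mem_powerset.mpr fun x hx => mem_compl.mpr (mem_sdiff.mp hx).2
  · simp
  · intro S hS
    exact union_sdiff_of_subset (by simpa using hS)
  · intro B hB
    exact union_sdiff_cancel_left (subset_compl_iff_disjoint_left.mp (by simpa using hB))
  · intro S hS
    rw [union_sdiff_of_subset (by simpa using hS)]

namespace Matrix

variable {ι R : Type*} [Fintype ι] [DecidableEq ι] [CommRing R]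

theorem det_of_piecewise_diagonal (M : Matrix ι ι R) (d : ι → R) (S : Finset ι) :
    (of (S.piecewise M (diagonal d))).det
      = (M.submatrix (↑) (↑) : Matrix S S R).det * ∏ i ∈ Sᶜ, d i := by
  let e : {i // i ∈ S} ⊕ {i // i ∉ S} ≃ ι := Equiv.sumCompl (· ∈ S)
  have hblocks : (of (S.piecewise M (diagonal d))).submatrix e e =
      fromBlocks (M.submatrix (↑) (↑)) (M.submatrix (↑) (↑)) 0
        (diagonal fun i : {i // i ∉ S} => d i) := by
    ext (i | i) (j | j)
    · simp [e, Finset.piecewise]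
    · simp [e, Finset.piecewise]
    · have hij : (i : ι) ≠ j := fun h => i.2 (h ▸ j.2)
      simp [e, Finset.piecewise, i.2, hij]
    · simp [e, Finset.piecewise, i.2, diagonal_apply, Subtype.ext_iff]
  rw [← det_submatrix_equiv_self e, hblocks, det_fromBlocks_zero₂₁, det_diagonal,
    Finset.prod_subtype Sᶜ (p := (· ∉ S)) (by simp)]

theorem det_add_diagonal (M : Matrix ι ι R) (d : ι → R) :
    (M + diagonal d).det
      = ∑ S : Finset ι, (M.submatrix (↑) (↑) : Matrix S S R).det * ∏ i ∈ Sᶜ, d i := by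
  simp only [← det_of_piecewise_diagonal]
  exact detRowAlternating.toMultilinearMap.map_add_univ (fun i => M i) (fun i => diagonal d i)

theorem det_add_diagonal_indicator_compl (M : Matrix ι ι R) (A : Finset ι) :
    (M + diagonal fun i => if i ∈ A then 0 else 1).det
      = ∑ B ∈ Aᶜ.powerset, (M.submatrix (↑) (↑) : Matrix ↥(A ∪ B) ↥(A ∪ B) R).det := by
  have hprod (S : Finset ι) :
      ∏ i ∈ Sᶜ, (if i ∈ A then (0 : R) else 1) = if A ⊆ S then 1 else 0 := by
    split_ifs with hAS
    · exact Finset.prod_eq_one fun i hi => if_neg fun hiA => Finset.mem_compl.mp hi (hAS hiA)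
    · obtain ⟨a, haA, haS⟩ := Finset.not_subset.mp hAS
      exact Finset.prod_eq_zero (Finset.mem_compl.mpr haS) (if_pos haA)
  simp only [det_add_diagonal, hprod, mul_ite, mul_one, mul_zero, Finset.sum_ite,
    Finset.sum_const_zero, add_zero]
  exact Finset.sum_supersets_eq_sum_powerset_compl A _

end Matrix

/-- Conditional DPP normalization: for a positive semidefinite real matrix `L`
indexed by a finite set `ι` and a subset `A ⊆ ι`,
`∑_{B ⊆ ι \ A} det(L_{A ∪ B}) = det(L + I_Ā)`, where `I_Ā` is the diagonal
matrix with ones on the diagonal entries indexed by `ι \ A` and zeros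
elsewhere.  Consequently, whenever the normalization constant is nonzero, the
conditional DPP probabilities `det(L_{A∪B}) / det(L + I_Ā)` are nonnegative and
sum to one over the subsets `B ⊆ ι \ A`, i.e. they define a probability
distribution. -/
theorem conditional_dpp_normalization {ι : Type*} [Fintype ι] [DecidableEq ι]
    (L : Matrix ι ι ℝ) (hL : L.PosSemidef) (A : Finset ι)
    (IAbar : Matrix ι ι ℝ)
    (hIAbar : IAbar = Matrix.diagonal fun i => if i ∈ A then (0 : ℝ) else 1) :
    (∑ B ∈ (Aᶜ : Finset ι).powerset, (principalSub L (A ∪ B)).det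
        = (L + IAbar).det) ∧
    ((L + IAbar).det ≠ 0 →
      (∀ B ∈ (Aᶜ : Finset ι).powerset,
          0 ≤ (principalSub L (A ∪ B)).det / (L + IAbar).det) ∧
      ∑ B ∈ (Aᶜ : Finset ι).powerset,
          (principalSub L (A ∪ B)).det / (L + IAbar).det = 1) := by
  subst hIAbar
  have hsum : ∑ B ∈ Aᶜ.powerset, (principalSub L (A ∪ B)).det
      = (L + diagonal fun i => if i ∈ A then 0 else 1).det :=
    (det_add_diagonal_indicator_compl L A).symm
  have hminor_nonneg (B : Finset ι) : 0 ≤ (principalSub L (A ∪ B)).det :=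
    (hL.submatrix _).det_nonneg
  have hnorm_nonneg := hsum ▸ Finset.sum_nonneg fun B _ => hminor_nonneg B
  refine ⟨hsum, fun hne => ⟨fun B _ => div_nonneg (hminor_nonneg B) hnorm_nonneg, ?_⟩⟩
  rw [← Finset.sum_div, hsum, div_self hne]
end

section
/- Marginal kernel of an (unconditional) DPP: let L be a symmetric positive semidefinite real matrix indexed by a finite set ι, and set K = L(L + I)^{-1} (equivalently K = I − (L + I)^{-1}). Then for every subset B ⊆ ι, the sum over all Y with B ⊆ Y ⊆ ι of det(L_Y) equals det(L + I) · det(K_B); that is, the inclusion probability P(B ⊆ Y) under the DPP with kernel L equals det(K_B). -/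
/-!
Put `D = diag(1_{i ∉ B})` and `E = diag(1_{i ∈ B})`. Expanding `det (L + D)` multilinearly in the
rows gives `∑ₛ (∏_{i ∉ s} Dᵢᵢ) det L_s`, and the product is `1` exactly when `B ⊆ s`, so the
left-hand side is `det (L + D)`. Since `K (L + 1) = L` and `E + D = 1`, we have
`L + D = (E K + D)(L + 1)`, and `E K + D` has the rows of `K` on `B` and identity rows elsewhere,
so its determinant is `det K_B`.
-/

open Matrix BigOperators

namespace Matrix

variable {n R : Type*} [Fintype n] [DecidableEq n] [CommRing R]

theorem det_add_diagonal_eq_sum (M : Matrix n n R) (d : n → R) :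
    (M + diagonal d).det =
      ∑ s : Finset n, (∏ i ∈ sᶜ, d i) * (M.submatrix (↑) (↑) : Matrix s s R).det := by
  have hrows : ∀ s : Finset n, s.piecewise (fun i => M i) (fun i => diagonal d i) =
      fun i => (if i ∈ s then 1 else d i) • s.piecewise M.row (1 : Matrix n n R).row i := by
    intro s
    funext i j
    by_cases hi : i ∈ s <;> simp [Finset.piecewise, hi, diagonal_apply, one_apply]
  let D : (n → R) [⋀^n]→ₗ[R] R := detRowAlternating
  change D ((fun i => M i) + fun i => diagonal d i) = _
  rw [D.map_add_univ]
  refine Finset.sum_congr rfl fun s _ => ?_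
  rw [hrows, AlternatingMap.map_smul_univ, ← det_piecewise_one_eq_submatrix_det, smul_eq_mul,
    Finset.prod_ite, Finset.prod_const_one, one_mul]
  congr 2
  ext i
  simp

theorem det_add_diagonal_compl_indicator (M : Matrix n n R) (B : Finset n) :
    (M + diagonal fun i => if i ∉ B then 1 else 0).det =
      ∑ Y ∈ Finset.univ.filter (B ⊆ ·), (M.submatrix (↑) (↑) : Matrix Y Y R).det := by
  have hsubset (Y : Finset n) : (∀ i ∈ Yᶜ, i ∉ B) ↔ B ⊆ Y := by
    simp [Finset.subset_iff, not_imp_comm]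
  simp only [det_add_diagonal_eq_sum, Finset.prod_boole, hsubset, ite_mul, one_mul, zero_mul,
    Finset.sum_filter]

theorem det_diagonal_indicator_mul_add (K : Matrix n n R) (B : Finset n) :
    (diagonal (fun i => if i ∈ B then 1 else 0) * K +
        diagonal fun i => if i ∉ B then 1 else 0).det =
      (K.submatrix (↑) (↑) : Matrix B B R).det := by
  rw [← det_piecewise_one_eq_submatrix_det]
  congr 1
  ext i j
  by_cases hi : i ∈ B <;> simp [Finset.piecewise, hi, diagonal_mul, diagonal_apply, one_apply]

end Matrix

/-- Marginal kernel of an (unconditional) DPP: with `L` symmetric positive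
semidefinite and `K = L (L + I)⁻¹`, for every subset `B ⊆ ι` the sum over all
`Y` with `B ⊆ Y ⊆ ι` of `det(L_Y)` equals `det(L + I) · det(K_B)`; i.e. the
inclusion probability `P(B ⊆ Y)` under the DPP with kernel `L` is `det(K_B)`. -/
theorem dpp_marginal_kernel {ι : Type*} [Fintype ι] [DecidableEq ι]
    (L : Matrix ι ι ℝ) (hL : L.PosSemidef)
    (K : Matrix ι ι ℝ) (hK : K = L * (L + 1)⁻¹)
    (B : Finset ι) :
    ∑ Y ∈ (Finset.univ : Finset (Finset ι)).filter (fun Y => B ⊆ Y),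
        (principalSub L Y).det
      = (L + 1).det * (principalSub K B).det := by
  set E : Matrix ι ι ℝ := diagonal fun i => if i ∈ B then 1 else 0
  set D : Matrix ι ι ℝ := diagonal fun i => if i ∉ B then 1 else 0
  have hdet : IsUnit (L + 1).det := (PosDef.posSemidef_add hL PosDef.one).det_pos.ne'.isUnit
  have hKL : K * (L + 1) = L := by rw [hK, Matrix.mul_assoc, nonsing_inv_mul _ hdet, mul_one]
  have hED : E + D = 1 := by
    rw [diagonal_add, ← diagonal_one]
    congr 1
    ext i
    by_cases hi : i ∈ B <;> simp [hi]
  have hfactor : L + D = (E * K + D) * (L + 1) := by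
    rw [add_mul, Matrix.mul_assoc, hKL, Matrix.mul_add, Matrix.mul_one, ← add_assoc, ← add_mul,
      hED, Matrix.one_mul]
  calc _ = (L + D).det := (det_add_diagonal_compl_indicator L B).symm
    _ = (L + 1).det * (principalSub K B).det := by
      rw [hfactor, det_mul, det_diagonal_indicator_mul_add, mul_comm]
      rfl
end

section
/- MIC objective of conditional DPPs (Proposition 1, objective formula): let L be a symmetric positive semidefinite real matrix indexed by a finite set ι, let A ⊆ ι, and assume L + I_Ā is invertible. Then the expected cardinality of the sampled set B under the conditional DPP given A, namely ∑_{B ⊆ ι\A} |B| · det(L_{A∪B}) / det(L + I_Ā), equals tr(I − [(L + I_Ā)^{-1}]_{ι\A}), where [(L + I_Ā)^{-1}]_{ι\A} is the principal submatrix of (L + I_Ā)^{-1} indexed by ι \ A and I is the identity matrix of the same size. -/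
open Matrix BigOperators

/-!
Expanding the determinant row by row gives `det (L + diag d) = ∑_T (∏_{j ∉ T} d j) · det L_T`,
so `det (L + I_Ā)` is the sum of the principal minors `det L_T` over `T ⊇ A`. Writing `|B|` as the
number of `i ∈ B` and exchanging the sums, the numerator `∑_B |B| · det L_{A∪B}` becomes
`∑_{i ∉ A} det (L + I_Ā - E_ii)`. Since the determinant is affine in row `i`, removing the `i`-th
diagonal one from `M = L + I_Ā` subtracts its `(i, i)` cofactor:
`det (M - E_ii) = det M · (1 - (M⁻¹)_ii)`.
-/

section

variable {ι R : Type*} [Fintype ι] [DecidableEq ι] [CommRing R]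

theorem Finset.sum_filter_superset_eq_sum_powerset_compl {M : Type*} [AddCommMonoid M]
    (A : Finset ι) (f : Finset ι → M) :
    ∑ T with A ⊆ T, f T = ∑ B ∈ Aᶜ.powerset, f (A ∪ B) := by
  refine sum_nbij' (· \ A) (A ∪ ·) ?_ ?_ ?_ ?_ ?_ <;> intro T hT <;>
    simp only [mem_filter, mem_univ, true_and, mem_powerset] at hT ⊢
  · simp
  · exact subset_union_left
  · exact union_sdiff_of_subset hT
  · exact union_sdiff_cancel_left (subset_compl_iff_disjoint_left.mp hT)
  · rw [union_sdiff_of_subset hT]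

theorem Finset.sum_filter_superset_card_sdiff_nsmul {M : Type*} [AddCommMonoid M]
    (A : Finset ι) (f : Finset ι → M) :
    ∑ T with A ⊆ T, (T \ A).card • f T = ∑ i ∈ Aᶜ, ∑ T with insert i A ⊆ T, f T := by
  simp_rw [← sum_const]
  refine sum_comm' fun T i => ?_
  simp only [mem_filter, mem_univ, true_and, mem_sdiff, mem_compl, insert_subset_iff]
  tauto

theorem Matrix.det_add_diagonal_eq_sum_minors (L : Matrix ι ι R) (d : ι → R) :
    (L + diagonal d).det =
      ∑ T : Finset ι, (∏ j ∈ Tᶜ, d j) * (L.submatrix ((↑) : T → ι) (↑)).det := by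
  have hrows : (L + diagonal d).row = L.row + fun i => d i • (1 : Matrix ι ι R).row i := by
    ext i j
    change L i j + diagonal d i j = L i j + d i * (1 : Matrix ι ι R) i j
    simp [diagonal_apply, one_apply]
  have hpiece (T : Finset ι) : T.piecewise L.row (fun i => d i • (1 : Matrix ι ι R).row i) =
      fun i => (if i ∈ T then 1 else d i) • T.piecewise L.row (1 : Matrix ι ι R).row i := by
    ext i j
    by_cases hi : i ∈ T <;> simp [hi]
  have hprod (T : Finset ι) : (∏ i, if i ∈ T then 1 else d i) = ∏ j ∈ Tᶜ, d j := by
    simp [Finset.prod_ite, Finset.filter_not, Finset.compl_eq_univ_sdiff]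
  change detRowAlternating (L + diagonal d).row = _
  rw [hrows, detRowAlternating.map_add_univ]
  refine Finset.sum_congr rfl fun T _ => ?_
  rw [hpiece, detRowAlternating.map_smul_univ, smul_eq_mul, hprod]
  exact congrArg _ (det_piecewise_one_eq_submatrix_det L T)

theorem Matrix.det_add_diagonal_indicator (L : Matrix ι ι R) (A : Finset ι) :
    (L + diagonal fun i => if i ∈ A then 0 else 1).det =
      ∑ T with A ⊆ T, (L.submatrix ((↑) : T → ι) (↑)).det := by
  rw [det_add_diagonal_eq_sum_minors, Finset.sum_filter]
  refine Finset.sum_congr rfl fun T _ => ?_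
  have hprod : (∏ j ∈ Tᶜ, if j ∈ A then (0 : R) else 1) = if A ⊆ T then 1 else 0 := by
    split_ifs with hAT
    · exact Finset.prod_eq_one fun j hj => if_neg fun hjA => Finset.mem_compl.mp hj (hAT hjA)
    · obtain ⟨a, haA, haT⟩ := Finset.not_subset.mp hAT
      exact Finset.prod_eq_zero (Finset.mem_compl.mpr haT) (if_pos haA)
  rw [hprod, ite_mul, one_mul, zero_mul]

theorem Matrix.det_sub_diagonal_single (M : Matrix ι ι R) (i : ι) (c : R) :
    (M - diagonal (Pi.single i c)).det = M.det - c * M.adjugate i i := by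
  have hrow : M - diagonal (Pi.single i c) = M.updateRow i (M i + (-c) • Pi.single i 1) := by
    ext a b
    by_cases ha : a = i
    · subst ha
      simp [diagonal_apply, Pi.single_apply, eq_comm, sub_eq_add_neg]
    · simp [diagonal_apply, ha]
  rw [hrow, det_updateRow_add, det_updateRow_smul, updateRow_eq_self, adjugate_apply]
  ring

end

theorem conditional_dpp_expected_cardinality_general {ι : Type*} [Fintype ι]
    [DecidableEq ι] (L : Matrix ι ι ℝ) (A : Finset ι)
    (IAbar : Matrix ι ι ℝ)
    (hIAbar : IAbar = Matrix.diagonal fun i => if i ∈ A then (0 : ℝ) else 1)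
    (hinv : IsUnit (L + IAbar).det) :
    ∑ B ∈ (Aᶜ : Finset ι).powerset,
        (B.card : ℝ) * (principalSub L (A ∪ B)).det / (L + IAbar).det
      = ((1 : Matrix (Aᶜ : Finset ι) (Aᶜ : Finset ι) ℝ)
          - ((L + IAbar)⁻¹).submatrix (fun x : (Aᶜ : Finset ι) => x.1) (fun x : (Aᶜ : Finset ι) => x.1)).trace := by
  subst hIAbar
  set M := L + diagonal fun i => if i ∈ A then (0 : ℝ) else 1 with hM
  have hdet : M.det ≠ 0 := hinv.ne_zero
  have hremove (i : ι) (hi : i ∈ Aᶜ) :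
      (L + diagonal fun j => if j ∈ insert i A then (0 : ℝ) else 1).det / M.det =
        1 - M⁻¹ i i := by
    have hdiag : (L + diagonal fun j => if j ∈ insert i A then (0 : ℝ) else 1) =
        M - diagonal (Pi.single i 1) := by
      rw [hM, add_sub_assoc, diagonal_sub]
      congr 2 with j
      by_cases hj : j = i
      · subst hj
        simp [Finset.mem_compl.mp hi]
      · simp [hj]
    rw [hdiag, det_sub_diagonal_single, one_mul, inv_def, Ring.inverse_eq_inv,
      Matrix.smul_apply, smul_eq_mul]
    field_simp
  calc _ = (∑ T with A ⊆ T, (T \ A).card • (principalSub L T).det) / M.det := by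
        rw [Finset.sum_div, Finset.sum_filter_superset_eq_sum_powerset_compl]
        refine Finset.sum_congr rfl fun B hB => ?_
        rw [Finset.union_sdiff_cancel_left, nsmul_eq_mul]
        exact Finset.subset_compl_iff_disjoint_left.mp (Finset.mem_powerset.mp hB)
    _ = ∑ i ∈ Aᶜ, (L + diagonal fun j => if j ∈ insert i A then (0 : ℝ) else 1).det / M.det := by
        rw [Finset.sum_filter_superset_card_sdiff_nsmul, Finset.sum_div]
        simp_rw [det_add_diagonal_indicator]
        rfl
    _ = ∑ i ∈ Aᶜ, (1 - M⁻¹ i i) := Finset.sum_congr rfl hremove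
    _ = _ := by
        rw [trace, ← Finset.sum_coe_sort]
        simp

/-- MIC objective of conditional DPPs (objective formula): with `L` symmetric
positive semidefinite, `A ⊆ ι`, and `L + I_Ā` invertible, the expected
cardinality of the sampled set under the conditional DPP given `A`, namely
`∑_{B ⊆ ι\A} |B| · det(L_{A∪B}) / det(L + I_Ā)`, equals
`tr(I − [(L + I_Ā)⁻¹]_{ι\A})`. -/
theorem conditional_dpp_expected_cardinality {ι : Type*} [Fintype ι]
    [DecidableEq ι] (L : Matrix ι ι ℝ) (hL : L.PosSemidef) (A : Finset ι)
    (IAbar : Matrix ι ι ℝ)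
    (hIAbar : IAbar = Matrix.diagonal fun i => if i ∈ A then (0 : ℝ) else 1)
    (hinv : IsUnit (L + IAbar).det) :
    ∑ B ∈ (Aᶜ : Finset ι).powerset,
        (B.card : ℝ) * (principalSub L (A ∪ B)).det / (L + IAbar).det
      = ((1 : Matrix (Aᶜ : Finset ι) (Aᶜ : Finset ι) ℝ)
          - ((L + IAbar)⁻¹).submatrix (fun x : (Aᶜ : Finset ι) => x.1) (fun x : (Aᶜ : Finset ι) => x.1)).trace :=
  conditional_dpp_expected_cardinality_general L A IAbar hIAbar hinv
end

section
/- Expected cardinality of a DPP in trace form: let L be a symmetric positive semidefinite real matrix indexed by a finite set ι. Then ∑_{Y ⊆ ι} |Y| · det(L_Y) = det(L + I) · tr(L(L + I)^{-1}); that is, the expected cardinality E[|Y|] of the DPP with kernel L equals tr(K) with K = L(L + I)^{-1}. -/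
/-!
Put `P(t) = det(1 + t L)`. Expanding the determinant by rows gives
`P(t) = ∑_Y det(L_Y) t^|Y|`, so the left-hand side is `P'(1)`. On the other hand
`P(1 + s) = det(1 + L) · det(1 + s (1 + L)⁻¹ L)`, and the derivative of
`det(1 + s N)` at `s = 0` is `tr N`; hence `P'(1) = det(1 + L) tr((1 + L)⁻¹ L)`.
-/

open Matrix BigOperators

open Polynomial

namespace Matrix

variable {ι R : Type*} [Fintype ι] [DecidableEq ι] [CommRing R]

theorem det_one_add_X_smul_eq_sum_det_submatrix (M : Matrix ι ι R) :
    det (1 + (X : R[X]) • M.map C) =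
      ∑ S : Finset ι, C (M.submatrix ((↑) : S → ι) (↑)).det * X ^ S.card := by
  ext k
  simp only [coeff_det_one_add_X_smul_eq_sum_minors, finsetSum_coeff, coeff_C_mul_X_pow,
    Finset.sum_ite, Finset.sum_const_zero, add_zero, Finset.powersetCard_eq_filter,
    Finset.powerset_univ, eq_comm]

theorem derivative_det_one_add_X_smul_eval_one (M : Matrix ι ι R) :
    (derivative (det (1 + (X : R[X]) • M.map C))).eval 1 =
      ∑ S : Finset ι, (S.card : R) * (M.submatrix ((↑) : S → ι) (↑)).det := by
  rw [det_one_add_X_smul_eq_sum_det_submatrix, derivative_sum, eval_finsetSum]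
  refine Finset.sum_congr rfl fun S _ => ?_
  rw [derivative_C_mul_X_pow]
  simp [mul_comm]

theorem det_one_add_X_smul_comp_X_add_one (M : Matrix ι ι R) :
    (det (1 + (X : R[X]) • M.map C)).comp (X + 1) =
      det ((1 + M).map C + (X : R[X]) • M.map C) := by
  rw [← coe_compRingHom_apply, RingHom.map_det]
  congr 1
  refine Matrix.ext fun i j => ?_
  rcases eq_or_ne i j with rfl | hij <;> simp [*] <;> ring

theorem derivative_det_add_X_smul_eval_zero (A M : Matrix ι ι R) (hA : IsUnit A.det) :
    (derivative (det (A.map C + (X : R[X]) • M.map C))).eval 0 = A.det * trace (A⁻¹ * M) := by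
  have hfactor :
      A.map C + (X : R[X]) • M.map C = A.map C * (1 + (X : R[X]) • (A⁻¹ * M).map C) := by
    rw [mul_add, mul_one, Matrix.mul_smul, ← Matrix.map_mul, ← Matrix.mul_assoc,
      mul_nonsing_inv _ hA, Matrix.one_mul]
  rw [hfactor, det_mul, ← RingHom.mapMatrix_apply, ← RingHom.map_det, derivative_C_mul,
    eval_mul, eval_C, derivative_det_one_add_X_smul]

theorem sum_card_mul_det_submatrix_eq_det_mul_trace (M : Matrix ι ι R)
    (hM : IsUnit (1 + M).det) :
    ∑ S : Finset ι, (S.card : R) * (M.submatrix ((↑) : S → ι) (↑)).det =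
      (1 + M).det * trace ((1 + M)⁻¹ * M) := by
  rw [← derivative_det_one_add_X_smul_eval_one, ← derivative_det_add_X_smul_eval_zero _ _ hM,
    ← det_one_add_X_smul_comp_X_add_one, derivative_comp]
  simp

end Matrix

/-- Expected cardinality of a DPP in trace form: for a symmetric positive
semidefinite real matrix `L` indexed by a finite set `ι`,
`∑_{Y ⊆ ι} |Y| · det(L_Y) = det(L + I) · tr(L (L + I)⁻¹)`; i.e. the expected
cardinality `E[|Y|]` of the DPP with kernel `L` equals `tr(K)` with
`K = L (L + I)⁻¹`. -/
theorem dpp_expected_cardinality {ι : Type*} [Fintype ι] [DecidableEq ι]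
    (L : Matrix ι ι ℝ) (hL : L.PosSemidef) :
    ∑ Y : Finset ι, (Y.card : ℝ) * (principalSub L Y).det
      = (L + 1).det * (L * (L + 1)⁻¹).trace := by
  have hunit : IsUnit (1 + L).det := (PosDef.one.add_posSemidef hL).det_pos.ne'.isUnit
  calc _ = (1 + L).det * trace ((1 + L)⁻¹ * L) :=
        sum_card_mul_det_submatrix_eq_det_mul_trace L hunit
    _ = _ := by rw [trace_mul_comm, add_comm]
end

section
/- Proposition 1 (derivative of the conditional MIC objective): let ι be a finite index set, A ⊆ ι, and let θ ↦ L(θ) be a map from ℝ to real matrices indexed by ι × ι whose entries are differentiable at θ₀, with L(θ₀) + I_Ā invertible. Then the MIC objective θ ↦ tr(I − [(L(θ) + I_Ā)⁻¹]_{ι\A}) is differentiable at θ₀ with derivative tr( (L(θ₀) + I_Ā)⁻¹ · I_Ā · (L(θ₀) + I_Ā)⁻¹ · L'(θ₀) ), i.e., the Frobenius inner product of ((L + I_Ā)⁻¹ I_Ā (L + I_Ā)⁻¹)ᵀ with the entrywise derivative ∂L/∂θ at θ₀. -/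
/-!
Differentiating `M(θ)⁻¹` gives `-M⁻¹ M' M⁻¹`, so the objective `|ι \ A| - ∑_{i ∉ A} M(θ)⁻¹ᵢᵢ`
with `M = L + I_Ā` has derivative `∑_{i ∉ A} (M⁻¹ L' M⁻¹)ᵢᵢ = tr(I_Ā M⁻¹ L' M⁻¹)`, which is the
claimed trace by cyclicity.
-/

open Matrix

theorem Matrix.hasDerivAt_iff {𝕜 : Type*} [NontriviallyNormedField 𝕜] {m n : Type*} [Fintype n]
    {f : 𝕜 → Matrix m n 𝕜} {f' : Matrix m n 𝕜} {x : 𝕜} :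
    HasDerivAt f f' x ↔ ∀ i j, HasDerivAt (fun t => f t i j) (f' i j) x :=
  hasDerivAt_pi.trans (forall_congr' fun _ => hasDerivAt_pi)

section

-- The ℓ² operator norm is used because its topology is definitionally the entrywise one.
open scoped Matrix.Norms.L2Operator

theorem HasDerivAt.matrix_inv {𝕜 : Type*} [RCLike 𝕜] {n : Type*} [Fintype n] [DecidableEq n]
    {f : 𝕜 → Matrix n n 𝕜} {f' : Matrix n n 𝕜} {x : 𝕜}
    (hf : HasDerivAt f f' x) (hx : IsUnit (f x).det) :
    HasDerivAt (fun t => (f t)⁻¹) (-((f x)⁻¹ * f' * (f x)⁻¹)) x := by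
  obtain ⟨u, hu⟩ := (isUnit_iff_isUnit_det _).mpr hx
  have h := (hu ▸ hasFDerivAt_ringInverse (𝕜 := 𝕜) u).comp_hasDerivAt x hf
  simpa [Function.comp_def, ← nonsing_inv_eq_ringInverse, coe_units_inv, hu] using h

end

theorem Matrix.trace_submatrix_subtype {R n : Type*} [AddCommMonoid R] (s : Finset n)
    (M : Matrix n n R) :
    (M.submatrix ((↑) : s → n) (↑)).trace = ∑ i ∈ s, M i i :=
  Finset.sum_coe_sort s fun i => M i i

theorem Matrix.trace_diagonal_indicator_compl_mul {R n : Type*} [Fintype n] [DecidableEq n]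
    [NonAssocSemiring R] (s : Finset n) (M : Matrix n n R) :
    (diagonal (fun i => if i ∈ s then 0 else 1) * M).trace = ∑ i ∈ sᶜ, M i i := by
  simp [trace, diagonal_mul, ite_mul, Finset.sum_ite, Finset.filter_not,
    Finset.compl_eq_univ_sdiff]

/-- Proposition 1 (derivative of the conditional MIC objective): for a finite
index set `ι`, `A ⊆ ι`, and a map `θ ↦ L(θ)` of real matrices indexed by
`ι × ι` whose entries are differentiable at `θ₀`, with `L(θ₀) + I_Ā`
invertible, the MIC objective `θ ↦ tr(I − [(L(θ) + I_Ā)⁻¹]_{ι\A})` is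
differentiable at `θ₀` with derivative
`tr((L(θ₀) + I_Ā)⁻¹ · I_Ā · (L(θ₀) + I_Ā)⁻¹ · L'(θ₀))`, where `L'(θ₀)` is the
entrywise derivative of `L` at `θ₀`. -/
theorem deriv_conditional_mic_objective {ι : Type*} [Fintype ι] [DecidableEq ι]
    (A : Finset ι) (L : ℝ → Matrix ι ι ℝ) (θ₀ : ℝ)
    (hdiff : ∀ i j, DifferentiableAt ℝ (fun θ => L θ i j) θ₀)
    (IAbar : Matrix ι ι ℝ)
    (hIAbar : IAbar = Matrix.diagonal fun i => if i ∈ A then (0 : ℝ) else 1)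
    (hinv : IsUnit (L θ₀ + IAbar).det)
    (L' : Matrix ι ι ℝ)
    (hL' : ∀ i j, L' i j = deriv (fun θ => L θ i j) θ₀) :
    HasDerivAt
      (fun θ => ((1 : Matrix (Aᶜ : Finset ι) (Aᶜ : Finset ι) ℝ)
          - ((L θ + IAbar)⁻¹).submatrix (fun x : (Aᶜ : Finset ι) => x.1)
              (fun x : (Aᶜ : Finset ι) => x.1)).trace)
      (((L θ₀ + IAbar)⁻¹ * IAbar * (L θ₀ + IAbar)⁻¹ * L').trace) θ₀ := by
  set N := (L θ₀ + IAbar)⁻¹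
  have hshift : HasDerivAt (fun θ => L θ + IAbar) L' θ₀ :=
    Matrix.hasDerivAt_iff.2 fun i j => hL' i j ▸ (hdiff i j).hasDerivAt.add_const (IAbar i j)
  have hinvL : HasDerivAt (fun θ => (L θ + IAbar)⁻¹) (-(N * L' * N)) θ₀ :=
    hshift.matrix_inv hinv
  have hdiag : HasDerivAt (fun θ => ∑ i ∈ Aᶜ, (L θ + IAbar)⁻¹ i i)
      (∑ i ∈ Aᶜ, -(N * L' * N) i i) θ₀ :=
    HasDerivAt.fun_sum fun i _ => Matrix.hasDerivAt_iff.1 hinvL i i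
  have hvalue : (N * IAbar * N * L').trace = -∑ i ∈ Aᶜ, -(N * L' * N) i i := by
    rw [Finset.sum_neg_distrib, neg_neg, ← trace_diagonal_indicator_compl_mul, ← hIAbar,
      Matrix.mul_assoc, Matrix.mul_assoc, trace_mul_comm]
    simp only [Matrix.mul_assoc]
  simp only [trace_sub, trace_one, trace_submatrix_subtype, hvalue]
  exact hdiag.const_sub _
end
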